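/- Let k ≥ k₀ > 0, R > 0, 0 < β < π, 0 < δ < 1, and let h(s) = k sin β (r(s) − R)/(2 r(s) μ(s)) on the strip {s ∈ C_{R,β} : |Im s| ≤ (1−δ) R sin β}. Then there exists C > 0 depending only on δ such that |h(s)| ≤ C k / √(kR sin β) on this strip. -/

import Mathlib

/-!
With `c = R e^{iβ}` the radicand of `r` factors as `(s - c)(s - c̄)`, so `|r|² = |s - c| |s - c̄|`.
On the strip both factors are at least `δ R sin β`, hence so is `|r|`; and the triangle inequality
bounds `|s|` and `|s - 2R cos β| = |s - c - c̄|` by `|r| + R`.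

Clearing the square roots gives `h = √k (r - R) √w / (2 r s)` with `w = R - s cos β + r`.
Since `(r - R)(r + R) = s (s - 2R cos β)` and `Re r ≥ 0` (so `|r + R| ≥ max (|r|, R)`), we get
`|r - R| ≤ 2|s|`; since `(R - s cos β)² = r² - s² sin² β`, we get `|w| ≤ 3|r| + R sin β`.
Hence `|h| ≤ √k √|w| / |r| ≤ (2/δ) √k / √(R sin β)`.
-/

/-- The cut plane `C_{R,β} = ℂ \ {R cos β + it : |t| ≥ R sin β}`. -/
def cutPlane (R β : ℝ) : Set ℂ :=
  {s : ℂ | ∀ t : ℝ, R * Real.sin β ≤ |t| → s ≠ (R * Real.cos β : ℂ) + t * Complex.I}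

/-- `r(s) = √(R² + s² − 2sR cos β)`, principal branch. -/
noncomputable def rfun (R β : ℝ) (s : ℂ) : ℂ :=
  ((R : ℂ) ^ 2 + s ^ 2 - 2 * s * R * Real.cos β) ^ ((1 : ℂ) / 2)

/-- `μ(s) = √k · s sin β / √(R − s cos β + r(s))`, principal branches. -/
noncomputable def mufun (k R β : ℝ) (s : ℂ) : ℂ :=
  (Real.sqrt k : ℂ) * s * Real.sin β /
    (((R : ℂ) - s * Real.cos β + rfun R β s) ^ ((1 : ℂ) / 2))

/-- `h(s) = k sin β (r(s) − R)/(2 r(s) μ(s))`. -/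
noncomputable def hfun (k R β : ℝ) (s : ℂ) : ℂ :=
  (k : ℂ) * Real.sin β * (rfun R β s - R) / (2 * rfun R β s * mufun k R β s)

open Complex ComplexConjugate

lemma Complex.sub_mul_sub_conj (s c : ℂ) :
    (s - c) * (s - conj c) = s ^ 2 - 2 * s * c.re + normSq c := by
  have h₁ := add_conj c
  push_cast at h₁
  linear_combination (-s) * h₁ + mul_conj c

lemma Complex.mul_abs_im_le_norm_sub {s c : ℂ} {δ : ℝ} (h : |s.im| ≤ (1 - δ) * |c.im|) :
    δ * |c.im| ≤ ‖s - c‖ := by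
  have h₁ := abs_im_le_norm (s - c)
  have h₂ := abs_sub_abs_le_abs_sub c.im s.im
  rw [sub_im, abs_sub_comm] at h₁
  linarith

lemma Complex.norm_le_norm_add_ofReal {z : ℂ} (hz : 0 ≤ z.re) {x : ℝ} (hx : 0 ≤ x) :
    ‖z‖ ≤ ‖z + x‖ := by
  rw [← sq_le_sq₀ (norm_nonneg _) (norm_nonneg _), Complex.sq_norm, Complex.sq_norm, normSq_apply,
    normSq_apply]
  simp only [add_re, ofReal_re, add_im, ofReal_im, add_zero]
  nlinarith

lemma Complex.le_norm_add_ofReal {z : ℂ} (hz : 0 ≤ z.re) (x : ℝ) : x ≤ ‖z + x‖ := by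
  have := re_le_norm (z + x)
  simp only [add_re, ofReal_re] at this
  linarith

lemma Complex.norm_cpow_one_half (z : ℂ) : ‖z ^ ((1 : ℂ) / 2)‖ = √‖z‖ := by
  rw [Real.sqrt_eq_rpow, ← norm_cpow_real]
  norm_num

lemma le_of_sq_eq_mul_of_le_of_le {x a b p : ℝ} (ha : x ≤ a) (hb : x ≤ b) (hp : 0 ≤ p)
    (hab : p ^ 2 = a * b) : x ≤ p := by
  rcases le_or_gt x 0 with hx | hx
  · linarith
  · nlinarith

lemma sqrt_div_le_two_div {δ q P W : ℝ} (hδ0 : 0 < δ) (hδ1 : δ ≤ 1) (hq : 0 < q)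
    (hP : δ * q ≤ P) (hW0 : 0 ≤ W) (hW : W ≤ 3 * P + q) : √W / P ≤ 2 / (δ * √q) := by
  have hP0 : 0 < P := (mul_pos hδ0 hq).trans_le hP
  rw [div_le_div_iff₀ hP0 (by positivity)]
  refine le_of_pow_le_pow_left₀ two_ne_zero (by positivity) ?_
  rw [mul_pow, mul_pow, Real.sq_sqrt hW0, Real.sq_sqrt hq.le]
  have hδq : 0 ≤ δ * q := by positivity
  -- `δ² q W ≤ 3 δ (δ q) P + (δ q)² ≤ 3 P² + P²`
  nlinarith [mul_le_mul_of_nonneg_left hW (by positivity : 0 ≤ δ ^ 2 * q),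
    mul_le_mul hP hP hδq hP0.le, mul_le_mul_of_nonneg_left hP (by positivity : 0 ≤ δ * P),
    mul_le_mul_of_nonneg_right hδ1 (by positivity : 0 ≤ P * P)]

noncomputable def branchPoint (R β : ℝ) : ℂ := ⟨R * Real.cos β, R * Real.sin β⟩

@[simp] lemma branchPoint_re (R β : ℝ) : (branchPoint R β).re = R * Real.cos β := rfl

@[simp] lemma branchPoint_im (R β : ℝ) : (branchPoint R β).im = R * Real.sin β := rfl

section

variable {k R β : ℝ} (s : ℂ)

lemma norm_branchPoint (hR : 0 ≤ R) : ‖branchPoint R β‖ = R := by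
  rw [norm_def, normSq_apply, branchPoint_re, branchPoint_im,
    show R * Real.cos β * (R * Real.cos β) + R * Real.sin β * (R * Real.sin β) = R ^ 2 by
      linear_combination R ^ 2 * Real.cos_sq_add_sin_sq β]
  exact Real.sqrt_sq hR

lemma rfun_mul_self :
    rfun R β s * rfun R β s = (R : ℂ) ^ 2 + s ^ 2 - 2 * s * R * Real.cos β := by
  rw [rfun, one_div, ← sq, cpow_ofNat_inv_pow]

lemma radicand_eq_mul_sub_conj :
    (R : ℂ) ^ 2 + s ^ 2 - 2 * s * R * Real.cos β =
      (s - branchPoint R β) * (s - conj (branchPoint R β)) := by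
  have hpyth : (Real.cos β : ℂ) ^ 2 + (Real.sin β : ℂ) ^ 2 = 1 := by
    exact_mod_cast Real.cos_sq_add_sin_sq β
  rw [Complex.sub_mul_sub_conj, normSq_apply, branchPoint_re, branchPoint_im]
  simp only [ofReal_mul, ofReal_add]
  linear_combination (-(R : ℂ) ^ 2) * hpyth

lemma re_rfun_nonneg : 0 ≤ (rfun R β s).re := by
  rw [rfun, one_div, cpow_inv_two_re]
  positivity

lemma norm_rfun_sq :
    ‖rfun R β s‖ ^ 2 = ‖s - branchPoint R β‖ * ‖s - conj (branchPoint R β)‖ := by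
  rw [sq, ← norm_mul, rfun_mul_self, radicand_eq_mul_sub_conj, norm_mul]

lemma norm_le_norm_rfun_add {u : ℂ} (h₁ : ‖u‖ ≤ ‖s - branchPoint R β‖ + R)
    (h₂ : ‖u‖ ≤ ‖s - conj (branchPoint R β)‖ + R) : ‖u‖ ≤ ‖rfun R β s‖ + R := by
  have := le_of_sq_eq_mul_of_le_of_le (sub_le_iff_le_add.2 h₁) (sub_le_iff_le_add.2 h₂)
    (norm_nonneg _) (norm_rfun_sq s)
  linarith

lemma norm_le_norm_rfun_add_self (hR : 0 ≤ R) : ‖s‖ ≤ ‖rfun R β s‖ + R := by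
  apply norm_le_norm_rfun_add s
  · exact (norm_le_norm_sub_add s _).trans_eq (by rw [norm_branchPoint hR])
  · exact (norm_le_norm_sub_add s _).trans_eq (by rw [Complex.norm_conj, norm_branchPoint hR])

lemma norm_sub_two_mul_cos_le (hR : 0 ≤ R) :
    ‖s - 2 * R * Real.cos β‖ ≤ ‖rfun R β s‖ + R := by
  have hsum : (2 * R * Real.cos β : ℂ) = branchPoint R β + conj (branchPoint R β) := by
    rw [add_conj, branchPoint_re]; push_cast; ring
  apply norm_le_norm_rfun_add s
  · rw [hsum, ← sub_sub]
    exact (norm_sub_le _ _).trans_eq (by rw [Complex.norm_conj, norm_branchPoint hR])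
  · rw [hsum, add_comm, ← sub_sub]
    exact (norm_sub_le _ _).trans_eq (by rw [norm_branchPoint hR])

lemma mul_le_norm_rfun {δ : ℝ} (hq : 0 ≤ R * Real.sin β)
    (hs : |s.im| ≤ (1 - δ) * (R * Real.sin β)) : δ * (R * Real.sin β) ≤ ‖rfun R β s‖ := by
  have him : |(branchPoint R β).im| = R * Real.sin β := abs_of_nonneg hq
  have him' : |(conj (branchPoint R β)).im| = R * Real.sin β := by rw [conj_im, abs_neg, him]
  have h₁ := mul_abs_im_le_norm_sub (s := s) (δ := δ) (c := branchPoint R β) (by rwa [him])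
  have h₂ := mul_abs_im_le_norm_sub (s := s) (δ := δ) (c := conj (branchPoint R β)) (by rwa [him'])
  rw [him] at h₁
  rw [him'] at h₂
  exact le_of_sq_eq_mul_of_le_of_le h₁ h₂ (norm_nonneg _) (norm_rfun_sq s)

lemma norm_rfun_sub_le (hR : 0 ≤ R) : ‖rfun R β s - R‖ ≤ 2 * ‖s‖ := by
  set r := rfun R β s
  have hfac : (r - R) * (r + R) = s * (s - 2 * R * Real.cos β) := by
    linear_combination rfun_mul_self s
  have hrT : ‖r‖ ≤ ‖r + R‖ := norm_le_norm_add_ofReal (re_rfun_nonneg s) hR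
  have hRT : R ≤ ‖r + R‖ := le_norm_add_ofReal (re_rfun_nonneg s) R
  rcases (norm_nonneg (r + R)).eq_or_lt with hT | hT
  · have := norm_sub_le r (R : ℂ)
    rw [norm_real, Real.norm_of_nonneg hR] at this
    linarith [norm_nonneg s]
  refine le_of_mul_le_mul_right ?_ hT
  calc ‖r - R‖ * ‖r + R‖ = ‖s‖ * ‖s - 2 * R * Real.cos β‖ := by rw [← norm_mul, hfac, norm_mul]
    _ ≤ ‖s‖ * (‖r‖ + R) := by gcongr; exact norm_sub_two_mul_cos_le s hR
    _ ≤ 2 * ‖s‖ * ‖r + R‖ := by nlinarith [norm_nonneg s]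

lemma norm_sub_mul_cos_add_rfun_le (hR : 0 ≤ R) (hsin : 0 ≤ Real.sin β) :
    ‖(R : ℂ) - s * Real.cos β + rfun R β s‖ ≤ 3 * ‖rfun R β s‖ + R * Real.sin β := by
  set r := rfun R β s
  have hpyth : (Real.cos β : ℂ) ^ 2 + (Real.sin β : ℂ) ^ 2 = 1 := by
    exact_mod_cast Real.cos_sq_add_sin_sq β
  have hsq : ((R : ℂ) - s * Real.cos β) ^ 2 = r * r - (s * Real.sin β) ^ 2 := by
    linear_combination -rfun_mul_self s + s ^ 2 * hpyth
  have hsin_norm : ‖s * Real.sin β‖ = ‖s‖ * Real.sin β := by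
    rw [norm_mul, norm_real, Real.norm_of_nonneg hsin]
  have hU : ‖(R : ℂ) - s * Real.cos β‖ ≤ ‖r‖ + ‖s‖ * Real.sin β := by
    refine le_of_pow_le_pow_left₀ two_ne_zero (by positivity) ?_
    calc ‖(R : ℂ) - s * Real.cos β‖ ^ 2 = ‖r * r - (s * Real.sin β) ^ 2‖ := by rw [← norm_pow, hsq]
      _ ≤ ‖r‖ ^ 2 + (‖s‖ * Real.sin β) ^ 2 := by
        exact (norm_sub_le _ _).trans_eq (by rw [norm_mul, norm_pow, hsin_norm, sq, sq])
      _ ≤ (‖r‖ + ‖s‖ * Real.sin β) ^ 2 := by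
        nlinarith [mul_nonneg (norm_nonneg r) (mul_nonneg (norm_nonneg s) hsin)]
  have hs : ‖s‖ * Real.sin β ≤ ‖r‖ + R * Real.sin β := by
    nlinarith [mul_le_mul_of_nonneg_right (norm_le_norm_rfun_add_self (β := β) s hR) hsin,
      mul_le_of_le_one_right (norm_nonneg r) (Real.sin_le_one β)]
  calc ‖(R : ℂ) - s * Real.cos β + r‖ ≤ ‖(R : ℂ) - s * Real.cos β‖ + ‖r‖ := norm_add_le _ _
    _ ≤ 3 * ‖r‖ + R * Real.sin β := by linarith

lemma hfun_eq (hk : 0 < k) (hsin : Real.sin β ≠ 0) :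
    hfun k R β s = √k * (rfun R β s - R) *
      ((R : ℂ) - s * Real.cos β + rfun R β s) ^ ((1 : ℂ) / 2) / (2 * rfun R β s * s) := by
  have hkc : (k : ℂ) = √k * √k := by exact_mod_cast (Real.mul_self_sqrt hk.le).symm
  have hne : (√k * Real.sin β : ℂ) ≠ 0 := by
    have := Real.sqrt_pos.2 hk
    exact_mod_cast mul_ne_zero this.ne' hsin
  rw [hfun, mufun, mul_div_assoc', div_div_eq_mul_div, hkc,
    ← mul_div_mul_left (√k * (rfun R β s - R) * _) (2 * rfun R β s * s) hne]
  congr 1 <;> ring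

lemma norm_hfun_le (hk : 0 ≤ k) (hR : 0 ≤ R) :
    ‖hfun k R β s‖ ≤ √k * √‖(R : ℂ) - s * Real.cos β + rfun R β s‖ / ‖rfun R β s‖ := by
  have hrhs : 0 ≤ √k * √‖(R : ℂ) - s * Real.cos β + rfun R β s‖ / ‖rfun R β s‖ := by positivity
  rcases hk.eq_or_lt with rfl | hk
  · simp [hfun]
  by_cases hsin : Real.sin β = 0
  · simpa [hfun, hsin] using hrhs
  rcases eq_or_ne s 0 with rfl | hs
  · simpa [hfun, mufun] using hrhs
  rw [hfun_eq s hk hsin, norm_div, norm_mul, norm_mul, norm_mul, norm_mul, norm_real,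
    Real.norm_of_nonneg (Real.sqrt_nonneg k), norm_cpow_one_half, Complex.norm_two]
  have hs' : 0 < ‖s‖ := norm_pos_iff.2 hs
  calc √k * ‖rfun R β s - R‖ * √‖(R : ℂ) - s * Real.cos β + rfun R β s‖ /
        (2 * ‖rfun R β s‖ * ‖s‖)
      ≤ √k * (2 * ‖s‖) * √‖(R : ℂ) - s * Real.cos β + rfun R β s‖ /
        (2 * ‖rfun R β s‖ * ‖s‖) := by gcongr; exact norm_rfun_sub_le s hR
    _ = √k * √‖(R : ℂ) - s * Real.cos β + rfun R β s‖ / ‖rfun R β s‖ := by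
      rw [← mul_div_mul_left (√k * _) ‖rfun R β s‖ (by positivity : 2 * ‖s‖ ≠ 0)]
      ring

end

theorem hfun_strip_bound (δ : ℝ) (hδ0 : 0 < δ) (hδ1 : δ < 1) :
    ∃ C : ℝ, 0 < C ∧
      ∀ k₀ k R β : ℝ, 0 < k₀ → k₀ ≤ k → 0 < R → 0 < β → β < Real.pi →
        ∀ s ∈ cutPlane R β, |s.im| ≤ (1 - δ) * R * Real.sin β →
          ‖hfun k R β s‖ ≤ C * k / Real.sqrt (k * R * Real.sin β) := by
  refine ⟨2 / δ, by positivity, fun k₀ k R β hk₀ hk hR hβ0 hβπ s _ hs => ?_⟩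
  have hk0 : 0 < k := hk₀.trans_le hk
  have hsin : 0 < Real.sin β := Real.sin_pos_of_pos_of_lt_pi hβ0 hβπ
  have hq : 0 < R * Real.sin β := mul_pos hR hsin
  have hr : δ * (R * Real.sin β) ≤ ‖rfun R β s‖ :=
    mul_le_norm_rfun s hq.le (hs.trans_eq (mul_assoc _ _ _))
  calc ‖hfun k R β s‖
      ≤ √k * (√‖(R : ℂ) - s * Real.cos β + rfun R β s‖ / ‖rfun R β s‖) :=
        (norm_hfun_le s hk0.le hR.le).trans_eq (mul_div_assoc _ _ _)
    _ ≤ √k * (2 / (δ * √(R * Real.sin β))) :=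
        mul_le_mul_of_nonneg_left (sqrt_div_le_two_div hδ0 hδ1.le hq hr (norm_nonneg _)
          (norm_sub_mul_cos_add_rfun_le s hR.le hsin.le)) (Real.sqrt_nonneg k)
    _ = 2 / δ * k / √(k * R * Real.sin β) := by
        rw [mul_assoc, Real.sqrt_mul hk0.le]
        field_simp
        rw [Real.sq_sqrt hk0.le]
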